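/- Consider the dataset in ℝ² with a₁ = (1, −1), y₁ = 1 and a₂ = (−1, −4), y₂ = −1, and the gradient descent iterates θ₀ = 0, θ_{t+1} = θ_t − γ ∇f(θ_t) with step size γ > 0. Then θ₂/γ → (1, 1/4) as γ → ∞, the limit point (1, 1/4) solves the classification task (y₁ a₁ᵀ(1,1/4) > 0 and y₂ a₂ᵀ(1,1/4) > 0), and f(θ₂) → 0 as γ → ∞. -/

import Mathlib

/-! From `θ₀ = 0` the first step is `θ₁ = γ (1/2, 3/4)`, where sample 1 has margin `-γ/4` and
sample 2 has margin `7γ/2`. As `γ → ∞` the sigmoid weights in `∇f(θ₁)` therefore tend to `1` and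
`0`, so `θ₂/γ = θ₁/γ - ∇f(θ₁) → (1/2, 3/4) + (1/2) y₁ a₁ = (1, 1/4)`. This direction separates
the data, hence the margins at `θ₂` grow linearly in `γ` and the loss tends to `0`. -/

noncomputable section

/-- The Euclidean dot product on `ℝ²`. -/
def dot2 (u v : ℝ × ℝ) : ℝ := u.1 * v.1 + u.2 * v.2

/-- First sample `a₁ = (1, −1)`, with label `y₁ = 1`. -/
def a1 : ℝ × ℝ := (1, -1)
/-- Second sample `a₂ = (−1, −4)`, with label `y₂ = −1`. -/
def a2 : ℝ × ℝ := (-1, -4)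
def y1 : ℝ := 1
def y2 : ℝ := -1

/-- The logistic loss for this two-sample dataset. -/
def floss (θ : ℝ × ℝ) : ℝ :=
  (1 / 2) * (Real.log (1 + Real.exp (-(y1 * dot2 a1 θ)))
    + Real.log (1 + Real.exp (-(y2 * dot2 a2 θ))))

/-- The gradient of the logistic loss for this two-sample dataset. -/
def gradf (θ : ℝ × ℝ) : ℝ × ℝ :=
  -((1 / 2 : ℝ) • ((1 + Real.exp (y1 * dot2 a1 θ))⁻¹ • (y1 • a1)
    + (1 + Real.exp (y2 * dot2 a2 θ))⁻¹ • (y2 • a2)))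

/-- The LR+GD iterates `θ₀ = 0`, `θ_{t+1} = θ_t − γ ∇f(θ_t)`. -/
def gdIter (γ : ℝ) : ℕ → ℝ × ℝ
  | 0 => 0
  | t + 1 => gdIter γ t - γ • gradf (gdIter γ t)

open Filter Topology

lemma dot2_smul_right (a u : ℝ × ℝ) (c : ℝ) : dot2 a (c • u) = c * dot2 a u := by
  simp only [dot2, Prod.smul_fst, Prod.smul_snd, smul_eq_mul]
  ring

lemma continuous_dot2_right (a : ℝ × ℝ) : Continuous (dot2 a) := by
  unfold dot2
  fun_prop

lemma tendsto_inv_one_add_exp_of_tendsto_atBot {α : Type*} {l : Filter α} {g : α → ℝ}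
    (hg : Tendsto g l atBot) : Tendsto (fun x => (1 + Real.exp (g x))⁻¹) l (𝓝 1) := by
  have h := ((Real.tendsto_exp_atBot.comp hg).const_add 1).inv₀ (by norm_num : (1 : ℝ) + 0 ≠ 0)
  simpa using h

lemma tendsto_inv_one_add_exp_of_tendsto_atTop {α : Type*} {l : Filter α} {g : α → ℝ}
    (hg : Tendsto g l atTop) : Tendsto (fun x => (1 + Real.exp (g x))⁻¹) l (𝓝 0) :=
  tendsto_inv_atTop_zero.comp (tendsto_atTop_add_const_left _ 1 (Real.tendsto_exp_atTop.comp hg))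

lemma tendsto_log_one_add_exp_neg_of_tendsto_atTop {α : Type*} {l : Filter α} {g : α → ℝ}
    (hg : Tendsto g l atTop) : Tendsto (fun x => Real.log (1 + Real.exp (-g x))) l (𝓝 0) := by
  have h := ((Real.tendsto_exp_atBot.comp (tendsto_neg_atTop_atBot.comp hg)).const_add 1).log
    (by norm_num : (1 : ℝ) + 0 ≠ 0)
  simpa using h

lemma tendsto_neg_gradf_of_margins {α : Type*} {l : Filter α} {θ : α → ℝ × ℝ}
    (h1 : Tendsto (fun x => y1 * dot2 a1 (θ x)) l atBot)
    (h2 : Tendsto (fun x => y2 * dot2 a2 (θ x)) l atTop) :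
    Tendsto (fun x => -gradf (θ x)) l (𝓝 ((1 / 2 : ℝ) • (y1 • a1))) := by
  have h := ((tendsto_inv_one_add_exp_of_tendsto_atBot h1).smul_const (y1 • a1)).add
    ((tendsto_inv_one_add_exp_of_tendsto_atTop h2).smul_const (y2 • a2)) |>.const_smul (1 / 2 : ℝ)
  simpa [gradf] using h

lemma tendsto_margin_atTop {θ : ℝ → ℝ × ℝ} {u a : ℝ × ℝ} {y : ℝ}
    (hθ : Tendsto (fun γ => γ⁻¹ • θ γ) atTop (𝓝 u)) (hu : 0 < y * dot2 a u) :
    Tendsto (fun γ => y * dot2 a (θ γ)) atTop atTop := by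
  have hdir : Tendsto (fun γ => y * dot2 a (γ⁻¹ • θ γ)) atTop (𝓝 (y * dot2 a u)) :=
    (((continuous_dot2_right a).tendsto u).comp hθ).const_mul y
  refine (tendsto_id.atTop_mul_pos hu hdir).congr' ?_
  filter_upwards [eventually_ne_atTop 0] with γ hγ
  simp only [id, dot2_smul_right]
  field_simp

lemma tendsto_floss_zero_of_direction {θ : ℝ → ℝ × ℝ} {u : ℝ × ℝ}
    (hθ : Tendsto (fun γ => γ⁻¹ • θ γ) atTop (𝓝 u))
    (h1 : 0 < y1 * dot2 a1 u) (h2 : 0 < y2 * dot2 a2 u) :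
    Tendsto (fun γ => floss (θ γ)) atTop (𝓝 0) := by
  have h := ((tendsto_log_one_add_exp_neg_of_tendsto_atTop (tendsto_margin_atTop hθ h1)).add
    (tendsto_log_one_add_exp_neg_of_tendsto_atTop (tendsto_margin_atTop hθ h2))).const_mul
    (1 / 2 : ℝ)
  simpa [floss] using h

lemma inv_smul_gdIter_succ {γ : ℝ} (hγ : γ ≠ 0) (t : ℕ) :
    γ⁻¹ • gdIter γ (t + 1) = γ⁻¹ • gdIter γ t - gradf (gdIter γ t) := by
  rw [gdIter, smul_sub, inv_smul_smul₀ hγ]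

lemma neg_gradf_zero : -gradf 0 = ((1 : ℝ) / 2, (3 : ℝ) / 4) := by
  simp only [gradf, dot2, a1, a2, y1, y2, Prod.ext_iff]
  norm_num

lemma gdIter_one (γ : ℝ) : gdIter γ 1 = γ • ((1 : ℝ) / 2, (3 : ℝ) / 4) := by
  rw [gdIter, gdIter, zero_sub, ← smul_neg, neg_gradf_zero]

theorem lr_gd_second_iterate_solves :
    Filter.Tendsto (fun γ : ℝ => γ⁻¹ • gdIter γ 2) Filter.atTop
      (nhds ((1 : ℝ), (1 / 4 : ℝ))) ∧
    (0 < y1 * dot2 a1 ((1 : ℝ), (1 / 4 : ℝ)) ∧ 0 < y2 * dot2 a2 ((1 : ℝ), (1 / 4 : ℝ))) ∧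
    Filter.Tendsto (fun γ : ℝ => floss (gdIter γ 2)) Filter.atTop (nhds 0) := by
  have hmargin1 : Tendsto (fun γ => y1 * dot2 a1 (gdIter γ 1)) atTop atBot := by
    refine (tendsto_id.atTop_mul_const_of_neg (r := -1 / 4) (by norm_num)).congr fun γ => ?_
    rw [id, gdIter_one, dot2_smul_right]
    simp only [dot2, a1, y1]
    ring
  have hmargin2 : Tendsto (fun γ => y2 * dot2 a2 (gdIter γ 1)) atTop atTop := by
    refine (tendsto_id.atTop_mul_const (r := 7 / 2) (by norm_num)).congr fun γ => ?_
    rw [id, gdIter_one, dot2_smul_right]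
    simp only [dot2, a2, y2]
    ring
  have hdir : Tendsto (fun γ : ℝ => γ⁻¹ • gdIter γ 2) atTop (𝓝 ((1 : ℝ), (1 / 4 : ℝ))) := by
    have h := (tendsto_const_nhds (x := -gradf 0)).add
      (tendsto_neg_gradf_of_margins hmargin1 hmargin2)
    rw [neg_gradf_zero] at h
    refine (h.congr' ?_).trans_eq ?_
    · filter_upwards [eventually_ne_atTop 0] with γ hγ
      rw [inv_smul_gdIter_succ hγ, gdIter_one, inv_smul_smul₀ hγ, sub_eq_add_neg]
    · simp only [a1, y1]
      norm_num
  have hsep :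
      0 < y1 * dot2 a1 ((1 : ℝ), (1 / 4 : ℝ)) ∧ 0 < y2 * dot2 a2 ((1 : ℝ), (1 / 4 : ℝ)) := by
    norm_num [dot2, a1, a2, y1, y2]
  exact ⟨hdir, hsep, tendsto_floss_zero_of_direction hdir hsep.1 hsep.2⟩

end
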